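/- arXiv:1008.0110 — 5 statements merged into one kernel-verified Lean document; each statement's English description precedes it below -/
import Mathlib

section
/- Let ABC be a triangle with circumcenter O and circumradius R. Let P be any point in the plane, and let A', B', C' be the orthogonal projections of P onto lines BC, CA, AB respectively. Then the area of triangle A'B'C' equals |R² − OP²|/(4R²) times the area of triangle ABC. -/
/-!
Let `a, b, c` be the side lengths and `x = [PBC]`, `y = [PCA]`, `z = [PAB]` twice the signed areas,
so `x + y + z = [ABC]`. With the origin at `P` and `J` the quarter turn, the foot on `BC` is
`(x / a²) • J (B - C)`, and similarly for the other two feet. Since `J` preserves signed area,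
`[A'B'C'] = (a²yz + b²zx + c²xy) / (a²b²c²) • [ABC]`. As `(x : y : z)` are barycentric
coordinates of `P`, the numerator is `[ABC]² (R² - OP²)`, and `a²b²c² = 4R²[ABC]²`.
-/

open EuclideanGeometry Real

noncomputable def triArea (X Y Z : EuclideanSpace ℝ (Fin 2)) : ℝ :=
  |(Y 0 - X 0) * (Z 1 - X 1) - (Y 1 - X 1) * (Z 0 - X 0)| / 2

/-- `F` is the foot of the perpendicular from `P` to the line through `X` and `Y`. -/
def IsFoot (P F X Y : EuclideanSpace ℝ (Fin 2)) : Prop :=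
  F ∈ affineSpan ℝ ({X, Y} : Set (EuclideanSpace ℝ (Fin 2))) ∧
    inner ℝ (P - F) (Y - X) = (0 : ℝ)

lemma two_inner_eq_norm_sq_of_dist_eq {V : Type*} [NormedAddCommGroup V] [InnerProductSpace ℝ V]
    {O A B : V} (h : dist O A = dist O B) :
    2 * inner ℝ (O - A) (B - A) = ‖B - A‖ ^ 2 := by
  have := norm_sub_sq_real (O - A) (B - A)
  rw [sub_sub_sub_cancel_right, ← dist_eq_norm, ← dist_eq_norm, h] at this
  linarith

section Plane

local notation "ℝ²" => EuclideanSpace ℝ (Fin 2)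

def cross (u v : ℝ²) : ℝ := u 0 * v 1 - u 1 * v 0

noncomputable def rot (u : ℝ²) : ℝ² := !₂[-u 1, u 0]

@[simp] lemma rot_apply_zero (u : ℝ²) : rot u 0 = -u 1 := rfl

@[simp] lemma rot_apply_one (u : ℝ²) : rot u 1 = u 0 := rfl

lemma inner_eq_coord (u v : ℝ²) : inner ℝ u v = u 0 * v 0 + u 1 * v 1 := by
  simp [PiLp.inner_apply, Fin.sum_univ_two, mul_comm]

lemma norm_sq_eq_coord (u : ℝ²) : ‖u‖ ^ 2 = u 0 ^ 2 + u 1 ^ 2 := by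
  simp [PiLp.norm_sq_eq_of_L2, Fin.sum_univ_two, sq_abs]

lemma dist_sq_eq_coord (X Y : ℝ²) : dist X Y ^ 2 = (X 0 - Y 0) ^ 2 + (X 1 - Y 1) ^ 2 := by
  rw [dist_eq_norm, norm_sq_eq_coord, PiLp.sub_apply, PiLp.sub_apply]

lemma triArea_eq_abs_cross (X Y Z : ℝ²) : triArea X Y Z = |cross (Y - X) (Z - X)| / 2 := rfl

lemma IsFoot.sub_eq {P F X Y : ℝ²} (hXY : X ≠ Y) (h : IsFoot P F X Y) :
    F - P = (cross (X - P) (Y - P) / dist X Y ^ 2) • rot (X - Y) := by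
  obtain ⟨hF, hperp⟩ := h
  obtain ⟨r, rfl⟩ := mem_affineSpan_pair_iff_exists_lineMap_eq.1 hF
  have hd : dist X Y ^ 2 ≠ 0 := pow_ne_zero 2 (dist_ne_zero.2 hXY)
  rw [dist_sq_eq_coord] at hd ⊢
  simp only [inner_eq_coord, AffineMap.lineMap_apply_module', PiLp.add_apply, PiLp.sub_apply,
    PiLp.smul_apply, smul_eq_mul] at hperp
  ext i
  fin_cases i <;>
    simp only [Fin.zero_eta, Fin.mk_one, Fin.isValue, AffineMap.lineMap_apply_module',
      PiLp.add_apply, PiLp.sub_apply, PiLp.smul_apply, smul_eq_mul, cross, rot_apply_zero,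
      rot_apply_one] <;>
    field_simp
  · linear_combination (X 0 - Y 0) * hperp
  · linear_combination (X 1 - Y 1) * hperp

lemma cross_smul_rot_sub (A B C : ℝ²) (α β γ : ℝ) :
    cross (β • rot (C - A) - α • rot (B - C)) (γ • rot (A - B) - α • rot (B - C)) =
      (α * β + β * γ + γ * α) * cross (B - A) (C - A) := by
  simp only [cross, PiLp.sub_apply, PiLp.smul_apply, rot_apply_zero, rot_apply_one, smul_eq_mul]
  ring

lemma cross_sq_mul_norm_sq (o u v : ℝ²) :
    cross u v ^ 2 * ‖o‖ ^ 2 = inner ℝ o u ^ 2 * ‖v‖ ^ 2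
      - 2 * inner ℝ o u * inner ℝ o v * inner ℝ u v + inner ℝ o v ^ 2 * ‖u‖ ^ 2 := by
  simp only [cross, inner_eq_coord, norm_sq_eq_coord]
  ring

lemma dist_sq_mul_dist_sq_mul_dist_sq {A B C O : ℝ²} {R : ℝ} (hA : dist O A = R)
    (hB : dist O B = R) (hC : dist O C = R) :
    dist B C ^ 2 * dist C A ^ 2 * dist A B ^ 2 = 4 * R ^ 2 * cross (B - A) (C - A) ^ 2 := by
  have hu := two_inner_eq_norm_sq_of_dist_eq (hA.trans hB.symm)
  have hv := two_inner_eq_norm_sq_of_dist_eq (hA.trans hC.symm)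
  have hgram := cross_sq_mul_norm_sq (O - A) (B - A) (C - A)
  rw [← dist_eq_norm, hA, ← hu, ← hv] at hgram
  have hBC := norm_sub_sq_real (B - A) (C - A)
  rw [sub_sub_sub_cancel_right] at hBC
  rw [dist_eq_norm, hBC, dist_eq_norm, dist_comm, dist_eq_norm, ← hu, ← hv]
  linear_combination -4 * hgram

lemma sum_dist_sq_mul_cross_mul_cross {A B C O : ℝ²} {R : ℝ} (hA : dist O A = R)
    (hB : dist O B = R) (hC : dist O C = R) (P : ℝ²) :
    dist B C ^ 2 * (cross (C - P) (A - P) * cross (A - P) (B - P)) +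
      dist C A ^ 2 * (cross (A - P) (B - P) * cross (B - P) (C - P)) +
      dist A B ^ 2 * (cross (B - P) (C - P) * cross (C - P) (A - P)) =
      cross (B - A) (C - A) ^ 2 * (R ^ 2 - dist O P ^ 2) := by
  set x := cross (B - P) (C - P)
  set y := cross (C - P) (A - P)
  set z := cross (A - P) (B - P)
  -- `x + y + z = [ABC]` and `x • (A - P) + y • (B - P) + z • (C - P) = 0`; expand the squared norm
  -- of the latter, and of the same combination of `A - O`, `B - O`, `C - O`.
  have hbary : dist B C ^ 2 * (y * z) + dist C A ^ 2 * (z * x) + dist A B ^ 2 * (x * y) =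
      cross (B - A) (C - A) * (x * dist A P ^ 2 + y * dist B P ^ 2 + z * dist C P ^ 2) := by
    simp only [x, y, z, cross, dist_sq_eq_coord, PiLp.sub_apply]
    ring
  have hpow : x * dist A P ^ 2 + y * dist B P ^ 2 + z * dist C P ^ 2 =
      cross (B - A) (C - A) * (R ^ 2 - dist O P ^ 2) := by
    have hA2 : dist O A ^ 2 = R ^ 2 := by rw [hA]
    have hB2 : dist O B ^ 2 = R ^ 2 := by rw [hB]
    have hC2 : dist O C ^ 2 = R ^ 2 := by rw [hC]
    linear_combination (norm := skip) x * hA2 + y * hB2 + z * hC2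
    simp only [x, y, z, cross, dist_sq_eq_coord, PiLp.sub_apply]
    ring
  rw [hbary, hpow]
  ring

end Plane

/-- Pedal triangle area formula. -/
theorem pedal_area (A B C O P A' B' C' : EuclideanSpace ℝ (Fin 2)) (R : ℝ)
    (hABC : AffineIndependent ℝ ![A, B, C])
    (hOA : dist O A = R) (hOB : dist O B = R) (hOC : dist O C = R)
    (hA' : IsFoot P A' B C) (hB' : IsFoot P B' C A) (hC' : IsFoot P C' A B) :
    triArea A' B' C' = |R ^ 2 - (dist O P) ^ 2| / (4 * R ^ 2) * triArea A B C := by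
  have hAB : A ≠ B := hABC.injective.ne (show (0 : Fin 3) ≠ 1 by decide)
  have hBC : B ≠ C := hABC.injective.ne (show (1 : Fin 3) ≠ 2 by decide)
  have hCA : C ≠ A := hABC.injective.ne (show (2 : Fin 3) ≠ 0 by decide)
  have hsides := dist_sq_mul_dist_sq_mul_dist_sq hOA hOB hOC
  have hR : R ≠ 0 := by
    intro h
    simp [h, hAB, hBC, hCA] at hsides
  have hsigned : cross (B' - A') (C' - A') =
      (R ^ 2 - dist O P ^ 2) / (4 * R ^ 2) * cross (B - A) (C - A) := by
    rw [← sub_sub_sub_cancel_right B' A' P, ← sub_sub_sub_cancel_right C' A' P,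
      hA'.sub_eq hBC, hB'.sub_eq hCA, hC'.sub_eq hAB, cross_smul_rot_sub]
    have hdAB := dist_ne_zero.2 hAB
    have hdBC := dist_ne_zero.2 hBC
    have hdCA := dist_ne_zero.2 hCA
    congr 1
    field_simp
    linear_combination 4 * R ^ 2 * sum_dist_sq_mul_cross_mul_cross hOA hOB hOC P
      - (R ^ 2 - dist O P ^ 2) * hsides
  rw [triArea_eq_abs_cross, triArea_eq_abs_cross, hsigned, abs_mul, abs_div,
    abs_of_pos (by positivity : 0 < 4 * R ^ 2)]
  ring
end

section
/- Let A₁ = (0,1), A₂ = (0,0), A₃ = (1,0), and let k₁, k₂, k₃ > 0. Define B₁ = (1/(1+k₁), 0), B₂ = (k₂/(1+k₂), 1/(1+k₂)), B₃ = (0, k₃/(1+k₃)), and then define C₁ on segment B₃B₂ with B₃C₁/C₁B₂ = k₁, C₂ on segment B₁B₃ with B₁C₂/C₂B₃ = k₂, and C₃ on segment B₂B₁ with B₂C₃/C₃B₁ = k₃ (explicitly, C₁ = (B₃ + k₁B₂)/(1+k₁), C₂ = (B₁ + k₂B₃)/(1+k₂), C₃ = (B₂ + k₃B₁)/(1+k₃)).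 Then the area of triangle C₁C₂C₃ equals (k₁k₂k₃ + 1)²/(2(1+k₁)²(1+k₂)²(1+k₃)²). -/
open EuclideanGeometry Real

/-!
If `Yᵢ = divPoint kᵢ X_{i+2} X_{i+1}` divides the side `X_{i+2} X_{i+1}` of a triangle in the
ratio `kᵢ` (indices mod 3), the oriented area scales by
`ρ = (k₁ k₂ k₃ + 1) / ((1 + k₁)(1 + k₂)(1 + k₃))`, a polynomial identity in the coordinates.
The points `Bᵢ` are obtained in this way from `A₁ A₂ A₃`, and the `Cᵢ` from `B₁ B₂ B₃` with the
same ratios, so `[C₁C₂C₃] = ρ² [A₁A₂A₃] = ρ² / 2`.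
-/

noncomputable section

def orientedDet (X Y Z : EuclideanSpace ℝ (Fin 2)) : ℝ :=
  (Y 0 - X 0) * (Z 1 - X 1) - (Y 1 - X 1) * (Z 0 - X 0)

theorem triArea_eq_abs_orientedDet (X Y Z : EuclideanSpace ℝ (Fin 2)) :
    triArea X Y Z = |orientedDet X Y Z| / 2 :=
  rfl

def divPoint {V : Type*} [AddCommGroup V] [Module ℝ V] (k : ℝ) (M P : V) : V :=
  (1 + k)⁻¹ • (M + k • P)

theorem orientedDet_divPoint {k₁ k₂ k₃ : ℝ} (h₁ : 1 + k₁ ≠ 0) (h₂ : 1 + k₂ ≠ 0)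
    (h₃ : 1 + k₃ ≠ 0) (X₁ X₂ X₃ : EuclideanSpace ℝ (Fin 2)) :
    orientedDet (divPoint k₁ X₃ X₂) (divPoint k₂ X₁ X₃) (divPoint k₃ X₂ X₁) =
      (k₁ * k₂ * k₃ + 1) / ((1 + k₁) * (1 + k₂) * (1 + k₃)) * orientedDet X₁ X₂ X₃ := by
  simp only [orientedDet, divPoint, PiLp.smul_apply, PiLp.add_apply, smul_eq_mul]
  field_simp
  ring

end

theorem area_C_triangle (k₁ k₂ k₃ : ℝ) (hk₁ : 0 < k₁) (hk₂ : 0 < k₂) (hk₃ : 0 < k₃)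
    (B₁ B₂ B₃ C₁ C₂ C₃ : EuclideanSpace ℝ (Fin 2))
    (hB₁ : B₁ = ![1 / (1 + k₁), 0])
    (hB₂ : B₂ = ![k₂ / (1 + k₂), 1 / (1 + k₂)])
    (hB₃ : B₃ = ![0, k₃ / (1 + k₃)])
    (hC₁ : C₁ = ((1 + k₁)⁻¹ : ℝ) • (B₃ + k₁ • B₂))
    (hC₂ : C₂ = ((1 + k₂)⁻¹ : ℝ) • (B₁ + k₂ • B₃))
    (hC₃ : C₃ = ((1 + k₃)⁻¹ : ℝ) • (B₂ + k₃ • B₁)) :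
    triArea C₁ C₂ C₃ =
      (k₁ * k₂ * k₃ + 1) ^ 2 / (2 * (1 + k₁) ^ 2 * (1 + k₂) ^ 2 * (1 + k₃) ^ 2) := by
  have h₁ : 1 + k₁ ≠ 0 := by positivity
  have h₂ : 1 + k₂ ≠ 0 := by positivity
  have h₃ : 1 + k₃ ≠ 0 := by positivity
  set A₁ : EuclideanSpace ℝ (Fin 2) := !₂[0, 1]
  set A₂ : EuclideanSpace ℝ (Fin 2) := !₂[0, 0]
  set A₃ : EuclideanSpace ℝ (Fin 2) := !₂[1, 0]
  have hB : B₁ = divPoint k₁ A₃ A₂ ∧ B₂ = divPoint k₂ A₁ A₃ ∧ B₃ = divPoint k₃ A₂ A₁ := by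
    refine ⟨?_, ?_, ?_⟩ <;> ext i <;> fin_cases i <;>
      simp [divPoint, A₁, A₂, A₃, hB₁, hB₂, hB₃] <;> field_simp
  have hA : orientedDet A₁ A₂ A₃ = 1 := by norm_num [orientedDet, A₁, A₂, A₃]
  rw [triArea_eq_abs_orientedDet, hC₁, hC₂, hC₃]
  change |orientedDet (divPoint k₁ B₃ B₂) (divPoint k₂ B₁ B₃) (divPoint k₃ B₂ B₁)| / 2 = _
  rw [orientedDet_divPoint h₁ h₂ h₃, hB.1, hB.2.1, hB.2.2, orientedDet_divPoint h₁ h₂ h₃, hA,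
    mul_one, abs_of_nonneg (by positivity)]
  field_simp
end

section
/- Let A₁A₂A₃ be a nondegenerate triangle, let B₁ ∈ segment A₂A₃, B₂ ∈ segment A₁A₃, B₃ ∈ segment A₂A₁, and let C₁ ∈ segment B₂B₃, C₂ ∈ segment B₁B₃, C₃ ∈ segment B₁B₂ satisfy A₂B₃/B₃A₁ = B₂C₃/C₃B₁, A₃B₁/B₁A₂ = B₃C₁/C₁B₂, and A₁B₂/B₂A₃ = B₁C₂/C₂B₃ (all points strictly interior to their segments). Then (area B₁B₂B₃)² = (area A₁A₂A₃)·(area C₁C₂C₃), i.e., the area of the middle inscribed triangle is the geometric mean of the areas of the outer and inner triangles. -/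
open EuclideanGeometry Real

/-!
The point `lineMap P Q t` divides `PQ` in the ratio `t : (1 - t)`, so the three ratio hypotheses
say that `B₁B₂B₃` and `C₁C₂C₃` are the images of `A₁A₂A₃` and `B₁B₂B₃` under one and the same
construction `T(P₁, P₂, P₃) = (lineMap P₃ P₂ t₁, lineMap P₁ P₃ t₂, lineMap P₂ P₁ t₃)`.
In barycentric coordinates `T` has determinant
`k = t₁t₂t₃ + (1 - t₁)(1 - t₂)(1 - t₃)`, so it multiplies signed areas by `k`:
`[B] = k [A]` and `[C] = k [B]`, whence `[B]² = [A][C]`.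
-/

open AffineMap

section Ratio

variable {V P : Type*} [NormedAddCommGroup V] [NormedSpace ℝ V] [MetricSpace P]
  [NormedAddTorsor V P]

theorem dist_lineMap_div_dist_lineMap_right {x z : P} (hxz : x ≠ z) {t : ℝ}
    (ht : t ∈ Set.Ioo 0 1) :
    dist x (lineMap x z t) / dist (lineMap x z t) z = t / (1 - t) := by
  rw [dist_left_lineMap, dist_lineMap_right, Real.norm_eq_abs, Real.norm_eq_abs,
    abs_of_pos ht.1, abs_of_pos (sub_pos.2 ht.2), mul_div_mul_right _ _ (dist_ne_zero.2 hxz)]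

theorem injOn_div_one_sub : Set.InjOn (fun t : ℝ ↦ t / (1 - t)) (Set.Iio 1) := by
  intro s (hs : s < 1) u (hu : u < 1) h
  have hs' : 1 - s ≠ 0 := by linarith
  have hu' : 1 - u ≠ 0 := by linarith
  field_simp at h
  linarith

theorem Sbtw.exists_lineMap_eq_of_dist_div_eq {x y z x' y' z' : P}
    (h : Sbtw ℝ x y z) (h' : Sbtw ℝ x' y' z')
    (hr : dist x y / dist y z = dist x' y' / dist y' z') :
    ∃ t : ℝ, lineMap x z t = y ∧ lineMap x' z' t = y' := by
  obtain ⟨t, ht, rfl⟩ := h.mem_image_Ioo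
  obtain ⟨s, hs, rfl⟩ := h'.mem_image_Ioo
  rw [dist_lineMap_div_dist_lineMap_right h.left_ne_right ht,
    dist_lineMap_div_dist_lineMap_right h'.left_ne_right hs] at hr
  exact ⟨t, rfl, by rw [injOn_div_one_sub ht.2 hs.2 hr]⟩

end Ratio

def doubleSignedArea (X Y Z : EuclideanSpace ℝ (Fin 2)) : ℝ :=
  (Y 0 - X 0) * (Z 1 - X 1) - (Y 1 - X 1) * (Z 0 - X 0)

theorem triArea_eq_abs_doubleSignedArea (X Y Z : EuclideanSpace ℝ (Fin 2)) :
    triArea X Y Z = |doubleSignedArea X Y Z| / 2 :=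
  rfl

theorem doubleSignedArea_lineMap (P₁ P₂ P₃ : EuclideanSpace ℝ (Fin 2)) (t₁ t₂ t₃ : ℝ) :
    doubleSignedArea (lineMap P₃ P₂ t₁) (lineMap P₁ P₃ t₂) (lineMap P₂ P₁ t₃) =
      (t₁ * t₂ * t₃ + (1 - t₁) * (1 - t₂) * (1 - t₃)) * doubleSignedArea P₁ P₂ P₃ := by
  simp only [doubleSignedArea, lineMap_apply_module, PiLp.add_apply, PiLp.smul_apply, smul_eq_mul]
  ring

theorem inscribed_geometric_mean_general (A₁ A₂ A₃ B₁ B₂ B₃ C₁ C₂ C₃ : EuclideanSpace ℝ (Fin 2))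
    (hB₁ : Sbtw ℝ A₂ B₁ A₃) (hB₂ : Sbtw ℝ A₁ B₂ A₃) (hB₃ : Sbtw ℝ A₂ B₃ A₁)
    (hC₁ : Sbtw ℝ B₃ C₁ B₂) (hC₂ : Sbtw ℝ B₁ C₂ B₃) (hC₃ : Sbtw ℝ B₂ C₃ B₁)
    (hr₃ : dist A₂ B₃ / dist B₃ A₁ = dist B₂ C₃ / dist C₃ B₁)
    (hr₁ : dist A₃ B₁ / dist B₁ A₂ = dist B₃ C₁ / dist C₁ B₂)
    (hr₂ : dist A₁ B₂ / dist B₂ A₃ = dist B₁ C₂ / dist C₂ B₃) :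
    (triArea B₁ B₂ B₃) ^ 2 = triArea A₁ A₂ A₃ * triArea C₁ C₂ C₃ := by
  obtain ⟨t₁, hB₁t, hC₁t⟩ := hB₁.symm.exists_lineMap_eq_of_dist_div_eq hC₁ hr₁
  obtain ⟨t₂, hB₂t, hC₂t⟩ := hB₂.exists_lineMap_eq_of_dist_div_eq hC₂ hr₂
  obtain ⟨t₃, hB₃t, hC₃t⟩ := hB₃.exists_lineMap_eq_of_dist_div_eq hC₃ hr₃
  have hB := doubleSignedArea_lineMap A₁ A₂ A₃ t₁ t₂ t₃
  have hC := doubleSignedArea_lineMap B₁ B₂ B₃ t₁ t₂ t₃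
  rw [hB₁t, hB₂t, hB₃t] at hB
  rw [hC₁t, hC₂t, hC₃t] at hC
  simp only [triArea_eq_abs_doubleSignedArea, hC, hB, abs_mul]
  ring

theorem inscribed_geometric_mean (A₁ A₂ A₃ B₁ B₂ B₃ C₁ C₂ C₃ : EuclideanSpace ℝ (Fin 2))
    (hA : AffineIndependent ℝ ![A₁, A₂, A₃])
    (hB₁ : Sbtw ℝ A₂ B₁ A₃) (hB₂ : Sbtw ℝ A₁ B₂ A₃) (hB₃ : Sbtw ℝ A₂ B₃ A₁)
    (hC₁ : Sbtw ℝ B₃ C₁ B₂) (hC₂ : Sbtw ℝ B₁ C₂ B₃) (hC₃ : Sbtw ℝ B₂ C₃ B₁)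
    (hr₃ : dist A₂ B₃ / dist B₃ A₁ = dist B₂ C₃ / dist C₃ B₁)
    (hr₁ : dist A₃ B₁ / dist B₁ A₂ = dist B₃ C₁ / dist C₁ B₂)
    (hr₂ : dist A₁ B₂ / dist B₂ A₃ = dist B₁ C₂ / dist C₂ B₃) :
    (triArea B₁ B₂ B₃) ^ 2 = triArea A₁ A₂ A₃ * triArea C₁ C₂ C₃ :=
  inscribed_geometric_mean_general A₁ A₂ A₃ B₁ B₂ B₃ C₁ C₂ C₃ hB₁ hB₂ hB₃ hC₁ hC₂ hC₃ hr₃ hr₁ hr₂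
end

section
/- Let ABC be a right triangle with the right angle at C, circumradius R, legs BC = a and AC = b. Let D be the point on line BC such that C is the midpoint of segment DB, and let C' be the orthogonal projection of D onto line AB. Then DC' = ab/R, BC' = a²/R, and if O is the midpoint of AB (the circumcenter), then OD² = 2a² + R². -/
/-!
Since `AC ⊥ DB` at the midpoint `C` of `DB`, the point `A` lies on the perpendicular bisector
of `DB`, so `AD = AB = 2R`, and `C` is the foot of the perpendicular from `A` to `DB`.
Projecting `D` onto `AB` and `A` onto `DB` both compute the inner product `⟪D - B, A - B⟫`,
whence `BC' · BA = BC · BD`, i.e. `BC' = a² / R`. Then `DC'` follows from Pythagoras in the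
right triangle `DC'B` together with `a² + b² = 4R²`, and `OD` from Apollonius in `DAB`.
-/

open EuclideanGeometry Real

open scoped RealInnerProductSpace

namespace EuclideanGeometry

variable {V P : Type*} [NormedAddCommGroup V] [InnerProductSpace ℝ V] [MetricSpace P]
  [NormedAddTorsor V P] {p f x y : P}

theorem exists_vsub_right_eq_smul_of_mem_affineSpan_pair (hf : f ∈ line[ℝ, x, y]) :
    ∃ r : ℝ, f -ᵥ y = r • (x -ᵥ y) := by
  rw [← vsub_vadd f y, vadd_right_mem_affineSpan_pair] at hf
  obtain ⟨r, hr⟩ := hf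
  exact ⟨r, hr.symm⟩

theorem dist_sq_add_dist_sq_of_mem_affineSpan_pair_of_inner_eq_zero
    (hf : f ∈ line[ℝ, x, y]) (hpf : ⟪p -ᵥ f, y -ᵥ x⟫ = 0) :
    dist p f ^ 2 + dist f y ^ 2 = dist p y ^ 2 := by
  obtain ⟨r, hr⟩ := exists_vsub_right_eq_smul_of_mem_affineSpan_pair hf
  have horth : ⟪p -ᵥ f, f -ᵥ y⟫ = 0 := by
    rw [hr, ← neg_vsub_eq_vsub_rev y x, inner_smul_right, inner_neg_right, hpf]; simp
  rw [dist_eq_norm_vsub V, dist_eq_norm_vsub V, dist_eq_norm_vsub V,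
    ← vsub_add_vsub_cancel p f y, norm_add_sq_real, horth]
  ring

theorem dist_mul_dist_eq_abs_inner_of_mem_affineSpan_pair_of_inner_eq_zero
    (hf : f ∈ line[ℝ, x, y]) (hpf : ⟪p -ᵥ f, y -ᵥ x⟫ = 0) :
    dist y f * dist x y = |⟪p -ᵥ y, x -ᵥ y⟫| := by
  obtain ⟨r, hr⟩ := exists_vsub_right_eq_smul_of_mem_affineSpan_pair hf
  have hproj : ⟪p -ᵥ y, x -ᵥ y⟫ = r * ‖x -ᵥ y‖ ^ 2 := by
    have hpf' : ⟪p -ᵥ f, x -ᵥ y⟫ = 0 := by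
      rw [← neg_vsub_eq_vsub_rev y x, inner_neg_right, hpf, neg_zero]
    rw [← vsub_add_vsub_cancel p f y, inner_add_left, hpf', hr, inner_smul_left,
      real_inner_self_eq_norm_sq]
    simp
  rw [hproj, dist_comm, dist_eq_norm_vsub V, dist_eq_norm_vsub V, hr, norm_smul, abs_mul,
    abs_of_nonneg (sq_nonneg ‖x -ᵥ y‖), Real.norm_eq_abs]
  ring

end EuclideanGeometry

theorem right_triangle_pedal_point (A B C D C' : EuclideanSpace ℝ (Fin 2)) (a b R : ℝ)
    (hABC : AffineIndependent ℝ ![A, B, C])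
    (hC : ∠ A C B = Real.pi / 2)
    (ha : a = dist B C) (hb : b = dist A C) (hR : R = dist A B / 2)
    (hD : C = midpoint ℝ D B)
    (hC' : IsFoot D C' A B) :
    dist D C' = a * b / R ∧ dist B C' = a ^ 2 / R ∧
      (dist (midpoint ℝ A B) D) ^ 2 = 2 * a ^ 2 + R ^ 2 := by
  have hRpos : 0 < R :=
    hR ▸ half_pos (dist_pos.mpr (hABC.injective.ne (by decide : (0 : Fin 3) ≠ 1)))
  have hAB : dist A B = 2 * R := by rw [hR]; ring
  have hDB : dist D B = 2 * a := by rw [ha, hD, dist_right_midpoint, Real.norm_two]; ring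
  have hpyth : a ^ 2 + b ^ 2 = 4 * R ^ 2 := by
    have := (dist_sq_eq_dist_sq_add_dist_sq_iff_angle_eq_pi_div_two A C B).mpr hC
    rw [hAB] at this
    rw [ha, hb]; linarith
  have hperp : ⟪A -ᵥ C, B -ᵥ D⟫ = 0 := by
    have := (InnerProductGeometry.inner_eq_zero_iff_angle_eq_pi_div_two _ _).mpr hC
    rwa [hD, right_vsub_midpoint, inner_smul_right, mul_eq_zero, or_iff_right (by norm_num),
      ← hD] at this
  have hDA : dist D A = 2 * R := by
    rw [dist_comm, ← hAB, ← AffineSubspace.mem_perpBisector_iff_dist_eq,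
      AffineSubspace.mem_perpBisector_iff_inner_eq_zero, ← hD]
    exact hperp
  have hpow : dist B C' * dist A B = dist B C * dist D B := by
    have hC_mem : C ∈ line[ℝ, D, B] := hD ▸ AffineMap.lineMap_mem_affineSpan_pair _ _ _
    rw [dist_mul_dist_eq_abs_inner_of_mem_affineSpan_pair_of_inner_eq_zero hC'.1 hC'.2,
      dist_mul_dist_eq_abs_inner_of_mem_affineSpan_pair_of_inner_eq_zero hC_mem hperp,
      real_inner_comm]
  have hBC' : dist B C' = a ^ 2 / R := by
    rw [hAB, hDB, ← ha] at hpow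
    field_simp
    linarith
  refine ⟨?_, hBC', ?_⟩
  · have hDC' := dist_sq_add_dist_sq_of_mem_affineSpan_pair_of_inner_eq_zero hC'.1 hC'.2
    rw [dist_comm C', hBC', hDB] at hDC'
    rw [← sq_eq_sq₀ dist_nonneg (by rw [ha, hb]; positivity)]
    field_simp at hDC' ⊢
    linear_combination hDC' - a ^ 2 * hpyth
  · have := dist_sq_add_dist_sq_eq_two_mul_dist_midpoint_sq_add_half_dist_sq D A B
    rw [hDA, hDB, hAB, dist_comm] at this
    linarith
end

section
/- Let ABC be a right triangle with the right angle at C, circumcenter O (the midpoint of AB), circumradius R, and legs BC = a, AC = b. Let D be the reflection of B over C, and let C' be the orthogonal projection of D onto line AB. Then the area of triangle DCC' equals a³b/(4R²), and consequently area(DCC')/area(ABC) = a²/(2R²) = (OD² − R²)/(4R²). -/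
open EuclideanGeometry Real

/-!
Write `C' = lineMap B A k`. The signed area of `D C C'` is affine in `k`: it vanishes at `k = 0`
since `D, C, B` are collinear, and at `k = 1` it is the signed area of `C B A`, because the
triangles `D C A` and `C B A` have equal bases `DC = CB` on one line and the same apex. Hence
`area(DCC') = k · area(ABC)`. As `AC ⊥ DB` at the midpoint `C`, `A` lies on the perpendicular
bisector of `DB`, so `AD = AB = 2R` and the foot parameter is `k = DB² / (2 AB²) = a² / (2R²)`.
Apollonius's theorem in the triangle `D A B` gives `OD² = R² + 2a²`.
-/

theorem dist_eq_of_angle_midpoint_eq_pi_div_two {V P : Type*} [NormedAddCommGroup V]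
    [InnerProductSpace ℝ V] [MetricSpace P] [NormedAddTorsor V P] {A D B : P}
    (h : ∠ A (midpoint ℝ D B) B = π / 2) : dist A D = dist A B := by
  have hperp := (InnerProductGeometry.inner_eq_zero_iff_angle_eq_pi_div_two _ _).mpr h
  rw [right_vsub_midpoint, invOf_eq_inv, real_inner_smul_right, mul_eq_zero] at hperp
  rw [← AffineSubspace.mem_perpBisector_iff_dist_eq,
    AffineSubspace.mem_perpBisector_iff_inner_eq_zero]
  simpa using hperp

noncomputable def signedArea (X Y Z : EuclideanSpace ℝ (Fin 2)) : ℝ :=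
  ((Y 0 - X 0) * (Z 1 - X 1) - (Y 1 - X 1) * (Z 0 - X 0)) / 2

theorem triArea_eq_abs_signedArea (X Y Z : EuclideanSpace ℝ (Fin 2)) :
    triArea X Y Z = |signedArea X Y Z| := by
  rw [triArea, signedArea, abs_div, abs_two]

theorem signedArea_swap (X Y Z : EuclideanSpace ℝ (Fin 2)) :
    signedArea Z Y X = -signedArea X Y Z := by
  simp only [signedArea]; ring

theorem triArea_swap (X Y Z : EuclideanSpace ℝ (Fin 2)) : triArea Z Y X = triArea X Y Z := by
  rw [triArea_eq_abs_signedArea, signedArea_swap, abs_neg, triArea_eq_abs_signedArea]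

theorem signedArea_lineMap (X Y P Q : EuclideanSpace ℝ (Fin 2)) (t : ℝ) :
    signedArea X Y (AffineMap.lineMap P Q t) =
      (1 - t) * signedArea X Y P + t * signedArea X Y Q := by
  simp only [signedArea, AffineMap.lineMap_apply_module, PiLp.add_apply, PiLp.smul_apply,
    smul_eq_mul]
  ring

theorem signedArea_left_midpoint_right (P Q : EuclideanSpace ℝ (Fin 2)) :
    signedArea P (midpoint ℝ P Q) Q = 0 := by
  simp only [signedArea, midpoint_eq_smul_add, invOf_eq_inv, PiLp.add_apply, PiLp.smul_apply,
    smul_eq_mul]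
  ring

theorem signedArea_left_midpoint (P Q Z : EuclideanSpace ℝ (Fin 2)) :
    signedArea P (midpoint ℝ P Q) Z = signedArea (midpoint ℝ P Q) Q Z := by
  simp only [signedArea, midpoint_eq_smul_add, invOf_eq_inv, PiLp.add_apply, PiLp.smul_apply,
    smul_eq_mul]
  ring

theorem dist_sq_eq_fin_two (X Y : EuclideanSpace ℝ (Fin 2)) :
    dist X Y ^ 2 = (X 0 - Y 0) ^ 2 + (X 1 - Y 1) ^ 2 := by
  rw [EuclideanSpace.dist_eq, Real.sq_sqrt (by positivity), Fin.sum_univ_two, Real.dist_eq,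
    Real.dist_eq, sq_abs, sq_abs]

theorem triArea_eq_of_angle_eq_pi_div_two {A B C : EuclideanSpace ℝ (Fin 2)}
    (h : ∠ A C B = π / 2) : triArea A B C = dist A C * dist B C / 2 := by
  have hinner : inner ℝ (A -ᵥ C) (B -ᵥ C) = (0 : ℝ) :=
    InnerProductGeometry.inner_eq_zero_iff_angle_eq_pi_div_two _ _ |>.mpr h
  simp only [PiLp.inner_apply, Fin.sum_univ_two, RCLike.inner_apply, conj_trivial, vsub_eq_sub,
    PiLp.sub_apply] at hinner
  have hsq : (2 * signedArea A B C) ^ 2 = (dist A C * dist B C) ^ 2 := by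
    rw [mul_pow (dist A C), dist_sq_eq_fin_two, dist_sq_eq_fin_two, signedArea]
    linear_combination (-((A 0 - C 0) * (B 0 - C 0) + (A 1 - C 1) * (B 1 - C 1))) * hinner
  have habs := (sq_eq_sq_iff_abs_eq_abs _ _).mp hsq
  rw [abs_mul, abs_two, abs_of_nonneg (by positivity : 0 ≤ dist A C * dist B C)] at habs
  rw [triArea_eq_abs_signedArea]
  linarith

theorem IsFoot.symm {P F X Y : EuclideanSpace ℝ (Fin 2)} (h : IsFoot P F X Y) : IsFoot P F Y X :=
  ⟨Set.pair_comm X Y ▸ h.1, by rw [← neg_sub Y X, inner_neg_right, h.2, neg_zero]⟩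

theorem IsFoot.eq_lineMap {P F X Y : EuclideanSpace ℝ (Fin 2)} (h : IsFoot P F X Y)
    (hXY : X ≠ Y) :
    F = AffineMap.lineMap X Y
      ((dist P X ^ 2 + dist X Y ^ 2 - dist P Y ^ 2) / (2 * dist X Y ^ 2)) := by
  obtain ⟨t, rfl⟩ := mem_affineSpan_pair_iff_exists_lineMap_eq.mp h.1
  have hperp : inner ℝ (P - X) (Y - X) = t * ‖Y - X‖ ^ 2 := by
    have h2 := h.2
    rw [AffineMap.lineMap_apply_module, show P - ((1 - t) • X + t • Y) = (P - X) - t • (Y - X) by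
      module, inner_sub_left, inner_smul_left, real_inner_self_eq_norm_sq] at h2
    simpa [sub_eq_zero] using h2
  have hpolar : ‖P - Y‖ ^ 2 = ‖P - X‖ ^ 2 - 2 * inner ℝ (P - X) (Y - X) + ‖Y - X‖ ^ 2 := by
    rw [← norm_sub_sq_real, sub_sub_sub_cancel_right]
  have hpos : 0 < ‖Y - X‖ := norm_pos_iff.mpr (sub_ne_zero.mpr hXY.symm)
  congr 1
  rw [dist_eq_norm, dist_eq_norm, dist_eq_norm, ← norm_neg (X - Y), neg_sub]
  field_simp
  linarith

theorem triArea_left_midpoint_lineMap (D B A : EuclideanSpace ℝ (Fin 2)) (k : ℝ) :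
    triArea D (midpoint ℝ D B) (AffineMap.lineMap B A k) =
      |k| * triArea A B (midpoint ℝ D B) := by
  rw [triArea_eq_abs_signedArea, signedArea_lineMap, signedArea_left_midpoint_right,
    signedArea_left_midpoint, mul_zero, zero_add, abs_mul, ← triArea_eq_abs_signedArea,
    triArea_swap]

theorem right_triangle_pedal_area (A B C D C' : EuclideanSpace ℝ (Fin 2)) (a b R : ℝ)
    (hABC : AffineIndependent ℝ ![A, B, C])
    (hC : ∠ A C B = Real.pi / 2)
    (ha : a = dist B C) (hb : b = dist A C) (hR : R = dist A B / 2)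
    (hD : C = midpoint ℝ D B)
    (hC' : IsFoot D C' A B) :
    triArea D C C' = a ^ 3 * b / (4 * R ^ 2) ∧
      triArea D C C' / triArea A B C = a ^ 2 / (2 * R ^ 2) ∧
      a ^ 2 / (2 * R ^ 2) = ((dist (midpoint ℝ A B) D) ^ 2 - R ^ 2) / (4 * R ^ 2) := by
  have hAC : A ≠ C := by simpa using hABC.injective.ne (show (0 : Fin 3) ≠ 2 by decide)
  have hBC : B ≠ C := by simpa using hABC.injective.ne (show (1 : Fin 3) ≠ 2 by decide)
  have ha0 : 0 < a := ha ▸ dist_pos.mpr hBC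
  have hb0 : 0 < b := hb ▸ dist_pos.mpr hAC
  have hAB : dist A B ^ 2 = a ^ 2 + b ^ 2 := by
    rw [ha, hb, sq, sq, sq, add_comm]
    exact (dist_sq_eq_dist_sq_add_dist_sq_iff_angle_eq_pi_div_two A C B).mpr hC
  have hR2 : 4 * R ^ 2 = a ^ 2 + b ^ 2 := by rw [hR, ← hAB]; ring
  have hR0 : R ≠ 0 := by rintro rfl; nlinarith
  have hAD : dist A D = dist A B := dist_eq_of_angle_midpoint_eq_pi_div_two (hD ▸ hC)
  have hDB : dist D B = 2 * a := by
    rw [ha, hD, dist_right_midpoint (𝕜 := ℝ), Real.norm_two]; ring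
  have hfoot : C' = AffineMap.lineMap B A (a ^ 2 / (2 * R ^ 2)) := by
    have hBA : B ≠ A := fun h => hR0 (by rw [hR, h, dist_self, zero_div])
    rw [hC'.symm.eq_lineMap hBA, dist_comm D A, hAD, hDB, dist_comm B A, add_sub_cancel_right,
      hAB, ← hR2]
    congr 1
    field_simp
    ring
  have hABC' : triArea A B C = a * b / 2 := by
    rw [triArea_eq_of_angle_eq_pi_div_two hC, ha, hb, mul_comm]
  have hDCC' : triArea D C C' = a ^ 2 / (2 * R ^ 2) * triArea A B C := by
    rw [hfoot, hD, triArea_left_midpoint_lineMap, abs_of_nonneg (by positivity)]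
  have hOD : dist (midpoint ℝ A B) D ^ 2 - R ^ 2 = 2 * a ^ 2 := by
    have := dist_sq_add_dist_sq_eq_two_mul_dist_midpoint_sq_add_half_dist_sq D A B
    rw [dist_comm D A, hAD, hDB, ← hR, dist_comm D] at this
    linear_combination (-1 / 2) * this + (1 / 2) * hAB - (1 / 2) * hR2
  refine ⟨?_, ?_, ?_⟩
  · rw [hDCC', hABC']
    field_simp
    ring
  · rw [hDCC', mul_div_cancel_right₀ _ (by rw [hABC']; positivity)]
  · rw [hOD]
    field_simp
    ring
end
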